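/- arXiv:2409.19225 — 4 statements merged into one kernel-verified Lean document; each statement's English description precedes it below -/
import Mathlib

section
/- Let X be a finite group, R a solvable normal subgroup of X, and G a finite non-abelian simple subgroup of X. Suppose there is a chain of normal subgroups 1 = R₀ ≤ R₁ ≤ ⋯ ≤ R_s = R of X with each R_{i+1}/R_i elementary abelian, and suppose GR_j = G × R_j but GR_{j+1} ≠ G × R_{j+1} for some j. Then G acts faithfully by conjugation on R_{j+1}/R_j ≅ (ℤ_r)^d, hence G embeds in GL(d, r) with d ≥ 2. -/
/-!
Conjugation makes `G` act on the elementary abelian section `B ⧸ A ≅ (ℤ/r)ᵈ`, that is, it gives a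
homomorphism `G → GL(d, r)`. Its kernel is normal in the simple group `G`. If the kernel were all
of `G`, then `⁅G, B⁆ ≤ A` and `⁅G, A⁆ = 1`, so the three subgroups lemma gives
`⁅⁅G, G⁆, B⁆ = 1`; as `G` is perfect, `G` would centralize `B`, and as `Z(G) = 1` also
`G ⊓ B = 1`, making `GB` the direct product `G × B`. So the action is faithful, and `d ≥ 2`
because `GL(0, r)` and `GL(1, r)` are abelian.
-/

open Subgroup

namespace IsSimpleGroup

variable {G : Type*} [Group G] [IsSimpleGroup G]

lemma isPerfect_of_not_isMulCommutative (hG : ¬ IsMulCommutative G) : Group.IsPerfect G :=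
  ⟨(commutator_normal ⊤ ⊤).eq_bot_or_eq_top.resolve_left (mt (commutator_eq_bot_iff G).mp hG)⟩

lemma center_eq_bot_of_not_isMulCommutative (hG : ¬ IsMulCommutative G) : center G = ⊥ :=
  (instNormalCenter (G := G)).eq_bot_or_eq_top.resolve_right (mt center_eq_top_iff.mp hG)

end IsSimpleGroup

namespace Subgroup

variable {X : Type*} [Group X]

lemma le_centralizer_of_commutator_le {H A B : Subgroup X} [Group.IsPerfect H]
    (hB : ⁅H, B⁆ ≤ A) (hA : A ≤ centralizer H) : B ≤ centralizer H := by
  rw [← commutator_eq_bot_iff_le_centralizer] at hA ⊢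
  have hHBH : ⁅⁅H, B⁆, H⁆ = ⊥ := eq_bot_iff.mpr <| hA ▸ commutator_mono hB le_rfl
  have hBHH : ⁅⁅B, H⁆, H⁆ = ⊥ := commutator_comm B H ▸ hHBH
  have hHHB := commutator_commutator_eq_bot_of_rotate hHBH hBHH
  rwa [commutator_eq_self, commutator_comm] at hHHB

lemma inf_eq_bot_of_le_centralizer {G B : Subgroup X} (hG : center G = ⊥)
    (hB : B ≤ centralizer G) : G ⊓ B = ⊥ := by
  refine eq_bot_iff.mpr fun x ⟨hxG, hxB⟩ => ?_
  have hcentral : (⟨x, hxG⟩ : G) ∈ center G :=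
    mem_center_iff.mpr fun g => Subtype.ext <| mem_centralizer_iff.mp (hB hxB) g g.2
  simpa [hG] using hcentral

end Subgroup

namespace QuotientGroup

variable {G H : Type*} [Group G] [Group H] (N : Subgroup H) [N.Normal]

def congrHom (φ : G →* MulAut H) (hφ : ∀ g, N.map (φ g : H →* H) = N) :
    G →* MulAut (H ⧸ N) where
  toFun g := congr N N (φ g) (hφ g)
  map_one' := by
    ext q
    induction q using QuotientGroup.induction_on
    simp [congr_mk]
  map_mul' g g' := by
    ext q
    induction q using QuotientGroup.induction_on
    simp [congr_mk]

@[simp]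
lemma congrHom_mk (φ : G →* MulAut H) (hφ : ∀ g, N.map (φ g : H →* H) = N) (g : G) (h : H) :
    congrHom N φ hφ g h = φ g h := rfl

end QuotientGroup

section ConjQuotient

variable {X : Type*} [Group X] (A B : Subgroup X) [A.Normal] [B.Normal]

lemma map_conjNormal_subgroupOf (x : X) :
    (A.subgroupOf B).map ((MulAut.conjNormal x : MulAut B) : B →* B) = A.subgroupOf B := by
  ext b
  simp only [mem_map]
  constructor
  · rintro ⟨a, ha, rfl⟩
    rw [mem_subgroupOf] at ha ⊢
    simpa [MulAut.conjNormal_apply] using ‹A.Normal›.conj_mem _ ha x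
  · intro hb
    refine ⟨(MulAut.conjNormal x).symm b, ?_, (MulAut.conjNormal x).apply_symm_apply b⟩
    rw [mem_subgroupOf] at hb ⊢
    simpa [MulAut.conjNormal_symm_apply] using ‹A.Normal›.conj_mem' _ hb x

def conjQuotient : X →* MulAut (B ⧸ A.subgroupOf B) :=
  QuotientGroup.congrHom _ MulAut.conjNormal (map_conjNormal_subgroupOf A B)

variable {A B}

lemma commutator_le_of_le_ker_conjQuotient {H : Subgroup X}
    (hH : H ≤ (conjQuotient A B).ker) : ⁅H, B⁆ ≤ A := by
  refine commutator_le.mpr fun g hg b hb => ?_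
  have hfix : conjQuotient A B g (⟨b, hb⟩ : B) = (⟨b, hb⟩ : B) := by
    rw [MonoidHom.mem_ker.mp (hH hg)]
    rfl
  rw [conjQuotient, QuotientGroup.congrHom_mk, QuotientGroup.eq_iff_div_mem,
    mem_subgroupOf] at hfix
  simpa [MulAut.conjNormal_apply, commutatorElement_def, div_eq_mul_inv] using hfix

lemma injective_conjQuotient_comp_subtype {G : Subgroup X} [IsSimpleGroup G]
    [Group.IsPerfect G] (hA : A ≤ centralizer G) (hB : ¬ B ≤ centralizer G) :
    Function.Injective ((conjQuotient A B).comp G.subtype) := by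
  rw [← MonoidHom.ker_eq_bot_iff]
  refine (MonoidHom.normal_ker _).eq_bot_or_eq_top.resolve_right fun htop => hB ?_
  rw [← MonoidHom.comap_ker, ← subgroupOf, subgroupOf_eq_top] at htop
  exact le_centralizer_of_commutator_le (commutator_le_of_le_ker_conjQuotient htop) hA

end ConjQuotient

lemma Matrix.mul_comm_of_subsingleton {n R : Type*} [Fintype n] [Subsingleton n]
    [CommSemiring R] (M N : Matrix n n R) : M * N = N * M := by
  ext i j
  obtain rfl := Subsingleton.elim i j
  simp only [Matrix.mul_apply]
  exact Finset.sum_congr rfl fun k _ => by rw [Subsingleton.elim k i, mul_comm]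

lemma Matrix.GeneralLinearGroup.two_le_card_of_injective {n R G : Type*} [Fintype n]
    [DecidableEq n] [CommRing R] [Group G] (hG : ¬ IsMulCommutative G) {f : G →* GL n R}
    (hf : Function.Injective f) : 2 ≤ Fintype.card n := by
  by_contra! hn
  have : Subsingleton n := Fintype.card_le_one_iff_subsingleton.mp (by omega)
  refine hG ⟨⟨fun a b => hf ?_⟩⟩
  rw [map_mul, map_mul]
  exact Units.ext (Matrix.mul_comm_of_subsingleton _ _)

namespace MulAut

def toZModLinearEquiv (r : ℕ) (V : Type*) [AddCommGroup V] [Module (ZMod r) V] :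
    MulAut (Multiplicative V) ≃* (V ≃ₗ[ZMod r] V) where
  toFun σ := (AddEquiv.toMultiplicative.symm σ).toLinearEquiv (ZMod.map_smul _)
  invFun e := AddEquiv.toMultiplicative e.toAddEquiv
  left_inv _ := rfl
  right_inv _ := rfl
  map_mul' _ _ := rfl

noncomputable def multiplicativeEquivGL (r : ℕ) (n : Type*) [Fintype n] [DecidableEq n] :
    MulAut (Multiplicative (n → ZMod r)) ≃* GL n (ZMod r) :=
  (toZModLinearEquiv r _).trans
    ((LinearMap.GeneralLinearGroup.generalLinearEquiv _ _).symm.trans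
      Matrix.GeneralLinearGroup.toLin.symm)

end MulAut

theorem embeds_in_GL_of_nondirect_general {X : Type*} [Group X]
    (A B G : Subgroup X) (hAnorm : A.Normal) (hBnorm : B.Normal)
    [IsSimpleGroup ↥G] (hGna : ¬ ∀ a b : ↥G, a * b = b * a)
    (hcommA : ∀ g ∈ G, ∀ a ∈ A, g * a = a * g)
    (hnd : ¬ (G ⊓ B = ⊥ ∧ ∀ g ∈ G, ∀ b ∈ B, g * b = b * g))
    (r d : ℕ) (hABn : (A.subgroupOf B).Normal)
    (hiso : Nonempty ((↥B ⧸ A.subgroupOf B) ≃* Multiplicative (Fin d → ZMod r))) :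
    2 ≤ d ∧ ∃ f : ↥G →* Matrix.GeneralLinearGroup (Fin d) (ZMod r),
      Function.Injective f := by
  have hG : ¬ IsMulCommutative G := mt isMulCommutative_iff.mp hGna
  have := IsSimpleGroup.isPerfect_of_not_isMulCommutative hG
  have hA : A ≤ centralizer G := fun a ha => mem_centralizer_iff.mpr fun g hg => hcommA g hg a ha
  have hB : ¬ B ≤ centralizer G := fun hB =>
    hnd ⟨inf_eq_bot_of_le_centralizer (IsSimpleGroup.center_eq_bot_of_not_isMulCommutative hG) hB,
      fun g hg b hb => mem_centralizer_iff.mp (hB hb) g hg⟩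
  obtain ⟨e⟩ := hiso
  let f := (MulAut.multiplicativeEquivGL r (Fin d)).toMonoidHom.comp <|
    (MulAut.congr e).toMonoidHom.comp ((conjQuotient A B).comp G.subtype)
  have hf : Function.Injective f := (MulAut.multiplicativeEquivGL r (Fin d)).injective.comp <|
    (MulAut.congr e).injective.comp (injective_conjQuotient_comp_subtype hA hB)
  exact ⟨by simpa using Matrix.GeneralLinearGroup.two_le_card_of_injective hG hf, f, hf⟩

/-- If `G` is a non-abelian simple subgroup of a finite group `X`, `A ≤ B` are
normal subgroups of `X` with `B` solvable and `B/A ≅ (ℤ_r)^d` elementary abelian,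
and `GA = G × A` while `GB` is not the internal direct product `G × B`, then `G`
embeds in `GL(d,r)` and `d ≥ 2`. -/
theorem embeds_in_GL_of_nondirect {X : Type*} [Group X] [Finite X]
    (A B G : Subgroup X) (hAnorm : A.Normal) (hBnorm : B.Normal) (hAB : A ≤ B)
    (hBsolv : IsSolvable ↥B)
    [IsSimpleGroup ↥G] (hGna : ¬ ∀ a b : ↥G, a * b = b * a)
    (hcommA : ∀ g ∈ G, ∀ a ∈ A, g * a = a * g) (hGA : G ⊓ A = ⊥)
    (hnd : ¬ (G ⊓ B = ⊥ ∧ ∀ g ∈ G, ∀ b ∈ B, g * b = b * g))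
    (r d : ℕ) (hr : r.Prime) (hABn : (A.subgroupOf B).Normal)
    (hiso : Nonempty ((↥B ⧸ A.subgroupOf B) ≃* Multiplicative (Fin d → ZMod r))) :
    2 ≤ d ∧ ∃ f : ↥G →* Matrix.GeneralLinearGroup (Fin d) (ZMod r),
      Function.Injective f :=
  embeds_in_GL_of_nondirect_general A B G hAnorm hBnorm hGna hcommA hnd r d hABn hiso
end

section
/- The group 2.A₇ (the double cover of the alternating group A₇) has, up to conjugacy, a unique subgroup of index 7, and every subgroup of index 7 of 2.A₇ is isomorphic to 2.A₆. In particular, 2.A₇ has no subgroup of index 7 isomorphic to ℤ₂ × A₆. -/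
/-!
The centre `Z` of order 2 lies in every subgroup `H` of index 7, since a 2-group acting on
7 cosets has a fixed point. Hence `H/Z` has index 7 in `A₇`, and counting orbits shows that
a subgroup of order 360 of `A₇` fixes a point, so `H/Z` is a point stabiliser `A₆`; as `A₇`
is transitive, all such `H` are conjugate. The transfer `Q → H^{ab}` sends the central
involution `z` to `z⁷ = z`, and it is trivial because `Q` is perfect, so `z ∈ [H, H]`; since
`A₆` is perfect this makes `H` perfect, and since `A₆` has trivial centre, `Z(H) = Z`.
A perfect group has no quotient `ℤ₂`, which excludes `H ≅ ℤ₂ × A₆`.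
-/

open Equiv Equiv.Perm MulAction Subgroup Nat

section GroupTheory

variable {G : Type*} [Group G]

theorem Subgroup.le_of_isPGroup_of_not_dvd_index {p : ℕ} [Fact p.Prime] {N : Subgroup G}
    [N.Normal] (hN : IsPGroup p N) {H : Subgroup G} (hH : ¬p ∣ H.index) : N ≤ H := by
  obtain ⟨x, hx⟩ := hN.nonempty_fixed_point_of_prime_not_dvd_card (G ⧸ H)
    (by rwa [← index_eq_card])
  induction x using QuotientGroup.induction_on with | H g => ?_
  intro n hn
  -- `N` fixes `gH`, so `g⁻¹ N g ≤ H`, and `N` is normal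
  have hfix : (g * n * g⁻¹) • (g : G ⧸ H) = g := hx ⟨_, Normal.conj_mem ‹_› n hn g⟩
  rw [MulAction.Quotient.smul_mk, smul_eq_mul, QuotientGroup.eq] at hfix
  simpa [mul_assoc] using hfix

theorem center_le_of_odd_index (hZ : Nat.card (center G) = 2) {H : Subgroup G}
    (hH : Odd H.index) : center G ≤ H :=
  le_of_isPGroup_of_not_dvd_index (IsPGroup.of_card (p := 2) (n := 1) (by rw [hZ, pow_one]))
    (by rwa [← even_iff_two_dvd, Nat.not_even_iff_odd])

theorem pow_index_mem_commutator_of_mem_center (hG : commutator G = ⊤) (H : Subgroup G)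
    [H.FiniteIndex] {z : H} (hz : (z : G) ∈ center G) : z ^ H.index ∈ commutator H := by
  have hconj : ∀ (k : ℕ) (g : G), g⁻¹ * (z : G) ^ k * g ∈ H → g⁻¹ * (z : G) ^ k * g = z ^ k :=
    fun k g _ ↦ by rw [mul_assoc, ← mem_center_iff.mp (pow_mem hz k) g, inv_mul_cancel_left]
  have htrivial : MonoidHom.transfer (Abelianization.of (G := H)) z = 1 :=
    Abelianization.commutator_subset_ker _ (hG ▸ mem_top (z : G))
  rw [Abelianization.of.transfer_eq_pow (z : G) hconj] at htrivial
  rwa [← Abelianization.ker_of, MonoidHom.mem_ker]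

theorem center_subgroupOf_le_commutator (hG : commutator G = ⊤) (H : Subgroup G)
    [H.FiniteIndex] (hcop : (Nat.card (center G)).Coprime H.index) :
    (center G).subgroupOf H ≤ commutator H := by
  intro z hz
  rw [mem_subgroupOf] at hz
  have horder : orderOf z ∣ Nat.card (center G) := by
    rw [← Subgroup.orderOf_coe, ← Subgroup.orderOf_mk (z : G) hz]
    exact orderOf_dvd_natCard _
  obtain ⟨m, hm⟩ := exists_pow_eq_self_of_coprime (hcop.symm.coprime_dvd_right horder)
  rw [← hm]
  exact pow_mem (pow_index_mem_commutator_of_mem_center hG H hz) m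

theorem center_subgroupOf_le_center (H : Subgroup G) : (center G).subgroupOf H ≤ center H :=
  fun _ hz ↦ mem_center_iff.mpr fun g ↦ Subtype.ext (mem_center_iff.mp hz g)

section Surjective

variable {P : Type*} [Group P] {f : G →* P}

theorem commutator_eq_top_of_surjective (hf : Function.Surjective f) (hP : commutator P = ⊤)
    (hker : f.ker ≤ commutator G) : commutator G = ⊤ :=
  map_injective_of_ker_le f hker le_top <| by
    rw [commutator_def, map_commutator, map_top_of_surjective f hf, ← commutator_def, hP]

theorem center_eq_ker_of_surjective (hf : Function.Surjective f) (hP : center P = ⊥)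
    (hker : f.ker ≤ center G) : center G = f.ker := by
  refine le_antisymm (fun c hc ↦ ?_) hker
  rw [MonoidHom.mem_ker, ← mem_bot, ← hP, mem_center_iff]
  intro y
  obtain ⟨x, rfl⟩ := hf y
  rw [← map_mul, ← map_mul, mem_center_iff.mp hc x]

theorem exists_map_conj_eq_of_surjective (hf : Function.Surjective f) {H K : Subgroup G}
    (hH : f.ker ≤ H) (hK : f.ker ≤ K) {p : P}
    (h : (H.map f).map (MulAut.conj p).toMonoidHom = K.map f) :
    ∃ g : G, H.map (MulAut.conj g).toMonoidHom = K := by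
  obtain ⟨g, rfl⟩ := hf p
  refine ⟨g, map_injective_of_ker_le f (fun w hw ↦ ?_) hK ?_⟩
  · refine ⟨g⁻¹ * w * g, hH (by simpa using f.normal_ker.conj_mem w hw g⁻¹), ?_⟩
    simp [MulAut.conj_apply, mul_assoc]
  · rw [← h, map_map, map_map]
    congr 1
    ext
    simp [MulAut.conj_apply]

end Surjective

theorem not_nonempty_mulEquiv_prod_of_commutator_eq_top {A P : Type*} [CommGroup A]
    [Nontrivial A] [Group P] (hG : commutator G = ⊤) : ¬Nonempty (G ≃* A × P) := by
  rintro ⟨e⟩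
  obtain ⟨x, hx⟩ := exists_ne (1 : A)
  have hker := Abelianization.commutator_subset_ker ((MonoidHom.fst A P).comp e.toMonoidHom)
  rw [hG] at hker
  exact hx (by simpa using MonoidHom.mem_ker.mp (hker (mem_top (e.symm (x, 1)))))

end GroupTheory

theorem MulAction.smul_mem_orbit_iff {G α : Type*} [Group G] [MulAction G α] (g : G) (a x : α) :
    g • x ∈ orbit G a ↔ x ∈ orbit G a := by
  rw [← orbit_eq_iff, orbit_smul, orbit_eq_iff]

theorem exists_forall_smul_eq_of_card_eq_one {G α : Type*} [Group G] [MulAction G α]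
    {s : Set α} (hs : ∀ (g : G) (x : α), g • x ∈ s ↔ x ∈ s) (h1 : Nat.card s = 1) :
    ∃ a : α, ∀ g : G, g • a = a := by
  obtain ⟨a, rfl⟩ := Set.ncard_eq_one.mp ((Nat.card_coe_set_eq s).symm.trans h1)
  exact ⟨a, fun g ↦ (hs g a).mpr rfl⟩

theorem card_le_factorial_mul_factorial_of_forall_smul_mem_iff {G α : Type*} [Group G]
    [MulAction G α] [FaithfulSMul G α] [Finite α] (s : Set α)
    (hs : ∀ (g : G) (x : α), g • x ∈ s ↔ x ∈ s) :
    Nat.card G ≤ (Nat.card s)! * (Nat.card ↥sᶜ)! := by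
  let restrict (g : G) : Perm s × Perm ↥sᶜ :=
    ((toPerm g).subtypePerm (hs g), (toPerm g).subtypePerm fun x ↦ not_congr (hs g x))
  have hinj : Function.Injective restrict := by
    intro g h hgh
    refine eq_of_smul_eq_smul (α := α) fun x ↦ ?_
    by_cases hx : x ∈ s
    · exact congr(($(congr_arg Prod.fst hgh) ⟨x, hx⟩ : α))
    · exact congr(($(congr_arg Prod.snd hgh) ⟨x, hx⟩ : α))
  simpa [Nat.card_prod, Nat.card_perm] using Nat.card_le_card_of_injective restrict hinj

namespace alternatingGroup

variable {α : Type*} [Fintype α] [DecidableEq α]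

theorem range_ofSubtype_compl_singleton (a : α) :
    (ofSubtype ({a}ᶜ : Finset α)).range = stabilizer (alternatingGroup α) a := by
  ext σ
  rw [mem_range_ofSubtype_iff, mem_stabilizer_iff, Finset.subset_compl_singleton, notMem_support]
  rfl

theorem nonempty_stabilizer_mulEquiv {n : ℕ} (hα : Fintype.card α = n + 1) (a : α) :
    Nonempty (stabilizer (alternatingGroup α) a ≃* alternatingGroup (Fin n)) := by
  have hcard : Fintype.card ({a}ᶜ : Finset α) = n := by simp [hα]
  exact ⟨(MulEquiv.subgroupCongr (range_ofSubtype_compl_singleton a)).symm.trans <|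
    (MonoidHom.ofInjective ofSubtype_injective).symm.trans
      (Fintype.equivFinOfCardEq hcard).altCongrHom⟩

/-- An orbit of size `k ∈ [2, 5]` would bound the order 360 of `M` by `k! (7 - k)! ≤ 240`, and
`7 ∤ 360`; so the orbit of `0` or its complement is a single fixed point. -/
theorem exists_forall_smul_eq_of_index_eq_seven {M : Subgroup (alternatingGroup (Fin 7))}
    (hM : M.index = 7) : ∃ a : Fin 7, ∀ g : M, g • a = a := by
  have hcard : Nat.card M = 360 := by
    have h := M.card_mul_index
    rw [hM, nat_card_alternatingGroup, Nat.card_fin, show 7 ! / 2 = 360 * 7 by decide] at h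
    exact Nat.eq_of_mul_eq_mul_right (by decide) h
  let O := orbit M (0 : Fin 7)
  have hO : ∀ (g : M) x, g • x ∈ O ↔ x ∈ O := fun g x ↦ smul_mem_orbit_iff g 0 x
  have hOc : ∀ (g : M) x, g • x ∈ Oᶜ ↔ x ∈ Oᶜ := fun g x ↦ not_congr (hO g x)
  have hdvd : Nat.card O ∣ 360 := by
    rw [← hcard, Nat.card_coe_set_eq, ← index_stabilizer]
    exact index_dvd_card _
  have hsum : Nat.card O + Nat.card ↥Oᶜ = 7 := by
    rw [Nat.card_coe_set_eq, Nat.card_coe_set_eq, Set.ncard_add_ncard_compl, Nat.card_fin]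
  have hpos : 0 < Nat.card O := Nat.card_pos_iff.mpr ⟨⟨0, mem_orbit_self 0⟩, inferInstance⟩
  have hbound := card_le_factorial_mul_factorial_of_forall_smul_mem_iff O hO
  rw [hcard] at hbound
  generalize hk : Nat.card O = k at *
  have hcompl : Nat.card ↥Oᶜ = 7 - k := by omega
  rw [hcompl] at hbound
  have hk7 : k ≤ 7 := by omega
  interval_cases k
  · exact exists_forall_smul_eq_of_card_eq_one hO hk
  all_goals first
    | exact absurd hbound (by decide)
    | exact absurd hdvd (by decide)
    | exact exists_forall_smul_eq_of_card_eq_one hOc hcompl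

theorem exists_eq_stabilizer_of_index_eq_seven {M : Subgroup (alternatingGroup (Fin 7))}
    (hM : M.index = 7) : ∃ a : Fin 7, M = stabilizer (alternatingGroup (Fin 7)) a := by
  obtain ⟨a, ha⟩ := exists_forall_smul_eq_of_index_eq_seven hM
  have hle : M ≤ stabilizer (alternatingGroup (Fin 7)) a := fun g hg ↦ ha ⟨g, hg⟩
  have := isPretransitive_of_three_le_card (Fin 7) (by simp)
  have hindex := relIndex_mul_index hle
  rw [index_stabilizer_of_transitive, Nat.card_fin, hM] at hindex
  exact ⟨a, le_antisymm hle (relIndex_eq_one.mp (by omega))⟩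

end alternatingGroup

section DoubleCover

variable {Q : Type*} [Group Q]

theorem exists_surjective_ker_eq_of_quotient_mulEquiv {N : Subgroup Q} [N.Normal]
    {P : Type*} [Group P] (e : Q ⧸ N ≃* P) :
    ∃ f : Q →* P, Function.Surjective f ∧ f.ker = N :=
  ⟨(e : Q ⧸ N →* P).comp (QuotientGroup.mk' N), e.surjective.comp (QuotientGroup.mk'_surjective N),
    by rw [MonoidHom.ker_mulEquiv_comp, QuotientGroup.ker_mk']⟩

variable {f : Q →* alternatingGroup (Fin 7)}

theorem ker_le_of_index_eq_seven (hker : f.ker = center Q) (hZ : Nat.card (center Q) = 2)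
    {H : Subgroup Q} (hH : H.index = 7) : f.ker ≤ H :=
  hker ▸ center_le_of_odd_index hZ (by rw [hH]; decide)

theorem exists_map_eq_stabilizer_of_index_eq_seven (hf : Function.Surjective f)
    (hker : f.ker = center Q) (hZ : Nat.card (center Q) = 2) {H : Subgroup Q}
    (hH : H.index = 7) : ∃ a : Fin 7, H.map f = stabilizer (alternatingGroup (Fin 7)) a :=
  alternatingGroup.exists_eq_stabilizer_of_index_eq_seven <| by
    rwa [index_map_eq H hf (ker_le_of_index_eq_seven hker hZ hH)]

theorem exists_map_conj_eq_of_index_eq_seven (hf : Function.Surjective f)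
    (hker : f.ker = center Q) (hZ : Nat.card (center Q) = 2) {H₁ H₂ : Subgroup Q}
    (h₁ : H₁.index = 7) (h₂ : H₂.index = 7) :
    ∃ q : Q, H₁.map (MulAut.conj q).toMonoidHom = H₂ := by
  obtain ⟨a₁, ha₁⟩ := exists_map_eq_stabilizer_of_index_eq_seven hf hker hZ h₁
  obtain ⟨a₂, ha₂⟩ := exists_map_eq_stabilizer_of_index_eq_seven hf hker hZ h₂
  have := alternatingGroup.isPretransitive_of_three_le_card (Fin 7) (by simp)
  obtain ⟨g, rfl⟩ := exists_smul_eq (alternatingGroup (Fin 7)) a₁ a₂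
  refine exists_map_conj_eq_of_surjective hf (ker_le_of_index_eq_seven hker hZ h₁)
    (ker_le_of_index_eq_seven hker hZ h₂) (p := g) ?_
  rw [ha₁, ha₂, stabilizer_smul_eq_stabilizer_map_conj]

theorem commutator_eq_top_and_center_of_index_eq_seven (hperf : commutator Q = ⊤)
    (hf : Function.Surjective f) (hker : f.ker = center Q) (hZ : Nat.card (center Q) = 2)
    {H : Subgroup Q} (hH : H.index = 7) :
    commutator H = ⊤ ∧ Nat.card (center H) = 2 ∧
      Nonempty ((H ⧸ center H) ≃* alternatingGroup (Fin 6)) := by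
  have : H.FiniteIndex := ⟨by rw [hH]; decide⟩
  obtain ⟨a, ha⟩ := exists_map_eq_stabilizer_of_index_eq_seven hf hker hZ hH
  obtain ⟨e⟩ := alternatingGroup.nonempty_stabilizer_mulEquiv (n := 6) (by simp) a
  let ψ : H.map f ≃* alternatingGroup (Fin 6) := (MulEquiv.subgroupCongr ha).trans e
  let π : H →* alternatingGroup (Fin 6) := (ψ : H.map f →* _).comp (f.subgroupMap H)
  have hπ : Function.Surjective π := ψ.surjective.comp (f.subgroupMap_surjective H)
  have hπker : π.ker = (center Q).subgroupOf H := by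
    rw [MonoidHom.ker_mulEquiv_comp, Subgroup.ker_subgroupMap, hker]
  have hcenter : center H = π.ker := center_eq_ker_of_surjective hπ
    (alternatingGroup.center_eq_bot (by simp)) (hπker ▸ center_subgroupOf_le_center H)
  refine ⟨commutator_eq_top_of_surjective hπ (commutator_alternatingGroup_eq_top (by simp))
    (hπker ▸ center_subgroupOf_le_commutator hperf H (by rw [hZ, hH]; decide)), ?_,
    ⟨(QuotientGroup.quotientMulEquivOfEq hcenter).trans
      (QuotientGroup.quotientKerEquivOfSurjective π hπ)⟩⟩
  rw [hcenter, hπker, ← hZ]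
  exact Nat.card_congr (subgroupOfEquivOfLe (center_le_of_odd_index hZ (by rw [hH]; decide))).toEquiv

end DoubleCover

theorem double_cover_A7_index_seven_subgroups_general {Q : Type*} [Group Q]
    (hperf : commutator Q = ⊤)
    (hZ : Nat.card (Subgroup.center Q) = 2)
    (hquot : Nonempty ((Q ⧸ Subgroup.center Q) ≃* alternatingGroup (Fin 7))) :
    (∀ H₁ H₂ : Subgroup Q, H₁.index = 7 → H₂.index = 7 →
      ∃ q : Q, Subgroup.map (MulAut.conj q).toMonoidHom H₁ = H₂) ∧
    (∀ H : Subgroup Q, H.index = 7 →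
      commutator ↥H = ⊤ ∧ Nat.card (Subgroup.center ↥H) = 2 ∧
      Nonempty ((↥H ⧸ Subgroup.center ↥H) ≃* alternatingGroup (Fin 6))) ∧
    (∀ H : Subgroup Q, H.index = 7 →
      ¬ Nonempty (↥H ≃* (Multiplicative (ZMod 2) × alternatingGroup (Fin 6)))) := by
  obtain ⟨e⟩ := hquot
  obtain ⟨f, hf, hker⟩ := exists_surjective_ker_eq_of_quotient_mulEquiv e
  have hstructure := fun (H : Subgroup Q) (hH : H.index = 7) ↦
    commutator_eq_top_and_center_of_index_eq_seven hperf hf hker hZ hH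
  exact ⟨fun _ _ ↦ exists_map_conj_eq_of_index_eq_seven hf hker hZ, hstructure,
    fun H hH ↦ not_nonempty_mulEquiv_prod_of_commutator_eq_top (hstructure H hH).1⟩

/-- The double cover `2.A₇` (a finite perfect group `Q` with `|Z(Q)| = 2` and
`Q/Z(Q) ≅ A₇`) has, up to conjugacy, a unique subgroup of index 7; every such
subgroup is isomorphic to `2.A₆` (perfect, centre of order 2, central quotient
`A₆`); in particular no subgroup of index 7 is isomorphic to `ℤ₂ × A₆`. -/
theorem double_cover_A7_index_seven_subgroups {Q : Type*} [Group Q] [Finite Q]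
    (hperf : commutator Q = ⊤)
    (hZ : Nat.card (Subgroup.center Q) = 2)
    (hquot : Nonempty ((Q ⧸ Subgroup.center Q) ≃* alternatingGroup (Fin 7))) :
    (∀ H₁ H₂ : Subgroup Q, H₁.index = 7 → H₂.index = 7 →
      ∃ q : Q, Subgroup.map (MulAut.conj q).toMonoidHom H₁ = H₂) ∧
    (∀ H : Subgroup Q, H.index = 7 →
      commutator ↥H = ⊤ ∧ Nat.card (Subgroup.center ↥H) = 2 ∧
      Nonempty ((↥H ⧸ Subgroup.center ↥H) ≃* alternatingGroup (Fin 6))) ∧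
    (∀ H : Subgroup Q, H.index = 7 →
      ¬ Nonempty (↥H ≃* (Multiplicative (ZMod 2) × alternatingGroup (Fin 6)))) :=
  double_cover_A7_index_seven_subgroups_general hperf hZ hquot
end

section
/- For every n ≥ 7, every subgroup of index n of the double cover 2.Aₙ of the alternating group Aₙ is isomorphic to 2.A_{n-1}; consequently 2.Aₙ has no subgroup of index n isomorphic to A_{n-1} × ℤ₂. -/
/-!
Let `H` have index `n` and let `φ : Q → Sym(Q ⧸ H)` be the coset action. Its kernel is a proper
normal subgroup, hence central because `Q` is perfect and `Q ⧸ Z(Q) ≅ Aₙ` is simple. As `Q` is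
perfect, `φ` lands in `Aₙ`, and `|Q| = n!` forces `ker φ = Z(Q)` and `im φ = Aₙ`. So `H` is the
preimage of a point stabilizer `A_{n-1}`; its centre is `Z(Q)` because `Z(A_{n-1}) = 1`, and its
central quotient is `A_{n-1}`.

It remains to see that `H` is perfect. Otherwise `⁅H, H⁆` maps isomorphically onto `A_{n-1}`, so
`φ` splits over one, hence (by conjugation) over every point stabilizer. Lifts over the perfect
groups `A_{n-1}` and `A_{n-2}` are unique, so the lifts of the even permutations with a fixed point
are canonical and compatible. Every product of three such lifts is a product of two, so the products
of two of them form a subgroup; it meets `Z(Q)` trivially and maps onto `Aₙ`, so `Q` is that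
subgroup times `Z(Q)` and cannot be perfect. Finally, a perfect group has no direct factor `ℤ₂`.
-/

open Equiv Equiv.Perm Subgroup Group
open scoped commutatorElement Pointwise

namespace Subgroup

variable {G : Type*} [Group G]

theorem commutator_sup_le_of_le_center {H Z : Subgroup G} (hZ : Z ≤ center G) :
    ⁅H ⊔ Z, H ⊔ Z⁆ ≤ ⁅H, H⁆ := by
  have : Z.Normal := ⟨fun z hz g => by rwa [mem_center_iff.mp (hZ hz) g, mul_inv_cancel_right]⟩
  rw [commutator_le]
  intro g₁ hg₁ g₂ hg₂
  rw [← SetLike.mem_coe, mul_normal] at hg₁ hg₂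
  obtain ⟨h₁, hh₁, z₁, hz₁, rfl⟩ := hg₁
  obtain ⟨h₂, hh₂, z₂, hz₂, rfl⟩ := hg₂
  have c₁ : ∀ g, Commute z₁ g := fun g => (mem_center_iff.mp (hZ hz₁) g).symm
  have c₂ : ∀ g, Commute g z₂ := mem_center_iff.mp (hZ hz₂)
  have : ⁅h₁ * z₁, h₂ * z₂⁆ = ⁅h₁, h₂⁆ := by
    rw [(c₁ h₁).symm.eq, commutatorElement_mul_left_eq_conj_mul,
      commutatorElement_mul_right_eq_mul_conj, commutatorElement_mul_right_eq_mul_conj,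
      commutatorElement_eq_one_iff_commute.mpr (c₂ _),
      commutatorElement_eq_one_iff_commute.mpr (c₂ _),
      commutatorElement_eq_one_iff_commute.mpr (c₁ _), (c₁ _).eq]
    group
  exact this ▸ commutator_mem_commutator hh₁ hh₂

theorem eq_top_of_sup_center_eq_top [IsPerfect G] {H : Subgroup G} (h : H ⊔ center G = ⊤) :
    H = ⊤ := by
  rw [eq_top_iff, ← IsPerfect.commutator_eq_top, _root_.commutator_def, ← h]
  exact (commutator_sup_le_of_le_center le_rfl).trans H.commutator_le_self

theorem normal_eq_top_or_le_center [IsPerfect G] [IsSimpleGroup (G ⧸ center G)]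
    (M : Subgroup G) [M.Normal] : M = ⊤ ∨ M ≤ center G := by
  have := Subgroup.Normal.map ‹_› _ (QuotientGroup.mk'_surjective (center G))
  rcases IsSimpleGroup.eq_bot_or_eq_top_of_normal _ this with h | h
  · rw [Subgroup.map_eq_bot_iff, QuotientGroup.ker_mk'] at h
    exact Or.inr h
  · refine Or.inl (eq_top_of_sup_center_eq_top ?_)
    rw [← QuotientGroup.ker_mk' (center G), ← comap_map_eq, h, comap_top]

theorem disjoint_or_le_of_prime_card [Finite G] (K : Subgroup G) {N : Subgroup G}
    (hN : (Nat.card N).Prime) : Disjoint K N ∨ N ≤ K := by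
  rcases hN.eq_one_or_self_of_dvd _ (card_dvd_of_le (inf_le_right : K ⊓ N ≤ N)) with h | h
  · exact Or.inl (disjoint_iff.mpr (card_eq_one.mp h))
  · exact Or.inr (inf_eq_right.mp (eq_of_le_of_card_ge inf_le_right h.ge))

theorem center_eq_ker_of_surjective {G' : Type*} [Group G'] {f : G →* G'}
    (hf : Function.Surjective f) (hker : f.ker ≤ center G) (hG' : center G' = ⊥) :
    center G = f.ker := by
  refine le_antisymm (fun z hz => ?_) hker
  suffices f z ∈ center G' by rwa [hG', mem_bot] at this
  rw [mem_center_iff]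
  intro g'
  obtain ⟨g, rfl⟩ := hf g'
  rw [← map_mul, ← map_mul, mem_center_iff.mp hz g]

end Subgroup

theorem Group.IsPerfect.not_nonempty_mulEquiv_prod {G K A : Type*} [Group G] [Group K]
    [CommGroup A] [Nontrivial A] [IsPerfect G] : ¬ Nonempty (G ≃* K × A) := by
  rintro ⟨f⟩
  have := IsPerfect.ofSurjective (f := f.toMonoidHom) f.surjective
  have := IsPerfect.ofSurjective (f := MonoidHom.snd K A) Prod.snd_surjective
  exact not_subsingleton A inferInstance

section AlternatingGroupOn

variable {α : Type*} [DecidableEq α]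

def alternatingGroupOn (s : Finset α) : Subgroup (Perm α) :=
  (alternatingGroup s).map Perm.ofSubtype

noncomputable def alternatingGroupOnEquiv (s : Finset α) :
    alternatingGroup s ≃* alternatingGroupOn s :=
  (alternatingGroup s).equivMapOfInjective _ Perm.ofSubtype_injective

theorem isPerfect_alternatingGroupOn {s : Finset α} (hs : 5 ≤ s.card) :
    IsPerfect (alternatingGroupOn s) :=
  have : IsPerfect (alternatingGroup s) :=
    isPerfect_iff.mpr (commutator_alternatingGroup_eq_self (by simpa using hs))
  IsPerfect.map _

variable [Fintype α]

theorem mem_alternatingGroupOn {s : Finset α} {σ : Perm α} :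
    σ ∈ alternatingGroupOn s ↔ σ ∈ alternatingGroup α ∧ ∀ x ∉ s, σ x = x := by
  rw [alternatingGroupOn, alternatingGroup.map_ofSubtype, mem_inf, Perm.mem_range_ofSubtype_iff,
    and_comm]
  refine and_congr_right fun _ => ⟨fun h x hx => ?_, fun h x hx => ?_⟩
  · by_contra hσx
    exact hx (h (mem_support.mpr hσx))
  · by_contra hxs
    exact mem_support.mp hx (h x hxs)

theorem mem_alternatingGroupOn_compl_singleton {b : α} {σ : Perm α} :
    σ ∈ alternatingGroupOn {b}ᶜ ↔ σ ∈ alternatingGroup α ∧ σ b = b := by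
  simp [mem_alternatingGroupOn]

theorem alternatingGroupOn_mono {s t : Finset α} (h : s ⊆ t) :
    alternatingGroupOn s ≤ alternatingGroupOn t := fun σ hσ => by
  rw [mem_alternatingGroupOn] at hσ ⊢
  exact ⟨hσ.1, fun x hx => hσ.2 x (fun hs => hx (h hs))⟩

theorem map_conj_alternatingGroupOn_compl_singleton (σ : Perm α) (b : α) :
    (alternatingGroupOn {b}ᶜ).map (MulAut.conj σ).toMonoidHom = alternatingGroupOn {σ b}ᶜ := by
  ext τ
  rw [mem_map_equiv, mem_alternatingGroupOn_compl_singleton,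
    mem_alternatingGroupOn_compl_singleton, MulAut.conj_symm_apply, mem_alternatingGroup,
    mem_alternatingGroup]
  simp [mul_right_comm _ (sign τ), Int.units_mul_self, Equiv.symm_apply_eq]

theorem exists_mem_alternatingGroup_fix_apply_eq {s : Finset α}
    (hs : s.card + 3 ≤ Fintype.card α) {p d : α} (hp : p ∉ s) (hd : d ∉ s) :
    ∃ σ ∈ alternatingGroup α, (∀ x ∈ s, σ x = x) ∧ σ p = d := by
  by_cases hpd : p = d
  · exact ⟨1, one_mem _, fun _ _ => rfl, hpd⟩
  obtain ⟨u, -, hu⟩ := Finset.exists_mem_notMem_of_card_lt_card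
    (s := insert p (insert d s)) (t := Finset.univ) <| by
      rw [Finset.card_univ]
      exact (Finset.card_insert_le _ _).trans_lt <| by
        have := Finset.card_insert_le d s
        omega
  simp only [Finset.mem_insert, not_or] at hu
  obtain ⟨hup, hud, hus⟩ := hu
  refine ⟨swap p u * swap p d, ?_, fun x hx => ?_, ?_⟩
  · simp [mem_alternatingGroup, sign_swap (Ne.symm hup), sign_swap hpd]
  · have hxp : x ≠ p := fun h => hp (h ▸ hx)
    have hxd : x ≠ d := fun h => hd (h ▸ hx)
    have hxu : x ≠ u := fun h => hus (h ▸ hx)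
    simp [swap_apply_of_ne_of_ne hxp hxd, swap_apply_of_ne_of_ne hxp hxu]
  · simp [swap_apply_of_ne_of_ne (Ne.symm hpd) (Ne.symm hud)]

theorem range_le_alternatingGroup {Q : Type*} [Group Q] [IsPerfect Q] (φ : Q →* Perm α) :
    φ.range ≤ alternatingGroup α := by
  have : IsPerfect φ.range := IsPerfect.range φ
  calc φ.range = ⁅φ.range, φ.range⁆ := φ.range.commutator_eq_self.symm
    _ ≤ commutator (Perm α) := commutator_mono le_top le_top
    _ ≤ alternatingGroup α := alternatingGroup.commutator_perm_le

end AlternatingGroupOn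

section Lifts

variable {Q P : Type*} [Group Q] [Group P] {φ : Q →* P} {C C' : Subgroup Q} {W W' : Subgroup P}

/-- `φ` maps `C` isomorphically onto `W`, i.e. `φ` splits over `W`. -/
structure IsLift (φ : Q →* P) (C : Subgroup Q) (W : Subgroup P) : Prop where
  map_eq : C.map φ = W
  disjoint_ker : Disjoint C φ.ker

namespace IsLift

theorem apply_mem (h : IsLift φ C W) {x : Q} (hx : x ∈ C) : φ x ∈ W :=
  h.map_eq ▸ mem_map_of_mem φ hx

theorem eq_of_map_eq (h : IsLift φ C W) {x y : Q} (hx : x ∈ C) (hy : y ∈ C) (hxy : φ x = φ y) :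
    x = y :=
  mul_inv_eq_one.mp <| disjoint_def.mp h.disjoint_ker (mul_mem hx (inv_mem hy))
    (by rw [MonoidHom.mem_ker, map_mul, map_inv, hxy, mul_inv_cancel])

theorem isPerfect [IsPerfect W] (h : IsLift φ C W) : IsPerfect C := by
  refine isPerfect_iff.mpr (le_antisymm C.commutator_le_self fun x hx => ?_)
  have : φ x ∈ (⁅C, C⁆ : Subgroup Q).map φ := by
    rw [map_commutator, h.map_eq, commutator_eq_self, ← h.map_eq]
    exact mem_map_of_mem φ hx
  obtain ⟨y, hy, hyx⟩ := this
  exact h.eq_of_map_eq hx (C.commutator_le_self hy) hyx.symm ▸ hy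

theorem unique (hker : φ.ker ≤ center Q) [IsPerfect W] (h : IsLift φ C W) (h' : IsLift φ C' W) :
    C = C' := by
  suffices key : ∀ {C C'}, IsLift φ C W → IsLift φ C' W → C' ≤ C from
    le_antisymm (key h' h) (key h h')
  intro C C' h h'
  have : IsPerfect C' := h'.isPerfect
  have hC' : C' ≤ C ⊔ φ.ker := by
    rw [← comap_map_eq, h.map_eq, ← h'.map_eq]
    exact le_comap_map φ C'
  calc C' = ⁅C', C'⁆ := C'.commutator_eq_self.symm
    _ ≤ ⁅C ⊔ φ.ker, C ⊔ φ.ker⁆ := commutator_mono hC' hC'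
    _ ≤ ⁅C, C⁆ := commutator_sup_le_of_le_center hker
    _ ≤ C := C.commutator_le_self

theorem inf_comap (h : IsLift φ C W) (hW : W' ≤ W) : IsLift φ (C ⊓ W'.comap φ) W' where
  map_eq := le_antisymm (map_le_iff_le_comap.mpr inf_le_right) fun w hw => by
    obtain ⟨x, hx, rfl⟩ := h.map_eq ▸ hW hw
    exact mem_map_of_mem φ (mem_inf.mpr ⟨hx, hw⟩)
  disjoint_ker := h.disjoint_ker.mono_left inf_le_left

theorem map_conj (h : IsLift φ C W) (q : Q) :
    IsLift φ (C.map (MulAut.conj q).toMonoidHom) (W.map (MulAut.conj (φ q)).toMonoidHom) where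
  map_eq := by
    rw [← h.map_eq, map_map, map_map]
    congr 1
    ext x
    simp
  disjoint_ker := by
    rw [disjoint_def]
    rintro _ ⟨c, hc, rfl⟩ hker
    have : c ∈ φ.ker := by simpa [MonoidHom.mem_ker] using hker
    simp [disjoint_def.mp h.disjoint_ker hc this]

end IsLift

end Lifts

section Splitting

variable {Q : Type*} [Group Q] {β : Type*} [DecidableEq β] [Fintype β] {φ : Q →* Perm β}

structure SplitsOverPointStabilizers (φ : Q →* Perm β) : Prop where
  ker_le_center : φ.ker ≤ center Q
  seven_le_card : 7 ≤ Fintype.card β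
  exists_isLift (m : β) : ∃ C, IsLift φ C (alternatingGroupOn {m}ᶜ)

/-- Under `SplitsOverPointStabilizers φ`, lifts are unique, so this is the set of canonical lifts
of the even permutations with a fixed point. -/
def pointLifts (φ : Q →* Perm β) : Set Q :=
  {x | ∃ m C, IsLift φ C (alternatingGroupOn {m}ᶜ) ∧ x ∈ C}

theorem exists_apply_eq_of_mem_pointLifts {x : Q} (hx : x ∈ pointLifts φ) :
    ∃ m, φ x m = m := by
  obtain ⟨m, C, hC, hxC⟩ := hx
  exact ⟨m, (mem_alternatingGroupOn_compl_singleton.mp (hC.apply_mem hxC)).2⟩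

theorem inv_mem_pointLifts {x : Q} (hx : x ∈ pointLifts φ) : x⁻¹ ∈ pointLifts φ := by
  obtain ⟨m, C, hC, hxC⟩ := hx
  exact ⟨m, C, hC, inv_mem hxC⟩

theorem conj_mem_pointLifts {x : Q} (hx : x ∈ pointLifts φ) (q : Q) :
    q * x * q⁻¹ ∈ pointLifts φ := by
  obtain ⟨m, C, hC, hxC⟩ := hx
  refine ⟨φ q m, _, ?_, mem_map_of_mem (MulAut.conj q).toMonoidHom hxC⟩
  rw [← map_conj_alternatingGroupOn_compl_singleton]
  exact hC.map_conj q

namespace SplitsOverPointStabilizers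

theorem mem_of_apply_eq (hφ : SplitsOverPointStabilizers φ) {x : Q} (hx : x ∈ pointLifts φ)
    {l : β} (hl : φ x l = l) {C : Subgroup Q} (hC : IsLift φ C (alternatingGroupOn {l}ᶜ)) :
    x ∈ C := by
  obtain ⟨m, C₀, hC₀, hxC₀⟩ := hx
  have : IsPerfect (alternatingGroupOn ({m, l}ᶜ : Finset β)) := by
    refine isPerfect_alternatingGroupOn ?_
    have := Finset.card_le_two (a := m) (b := l)
    have := hφ.seven_le_card
    rw [Finset.card_compl]
    omega
  have hWm : alternatingGroupOn ({m, l}ᶜ : Finset β) ≤ alternatingGroupOn {m}ᶜ :=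
    alternatingGroupOn_mono (by simp)
  have hWl : alternatingGroupOn ({m, l}ᶜ : Finset β) ≤ alternatingGroupOn {l}ᶜ :=
    alternatingGroupOn_mono (by simp)
  have hxW : φ x ∈ alternatingGroupOn ({m, l}ᶜ : Finset β) := by
    obtain ⟨hxA, hxm⟩ := mem_alternatingGroupOn_compl_singleton.mp (hC₀.apply_mem hxC₀)
    rw [mem_alternatingGroupOn]
    refine ⟨hxA, fun y hy => ?_⟩
    rcases (by simp at hy; tauto : y = m ∨ y = l) with rfl | rfl
    exacts [hxm, hl]
  have := (hC₀.inf_comap hWm).unique hφ.ker_le_center (hC.inf_comap hWl)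
  exact (this ▸ mem_inf.mpr ⟨hxC₀, hxW⟩ : x ∈ C ⊓ _).1

theorem eq_of_map_eq (hφ : SplitsOverPointStabilizers φ) {x y : Q} (hx : x ∈ pointLifts φ)
    (hy : y ∈ pointLifts φ) (hxy : φ x = φ y) : x = y := by
  obtain ⟨m, C, hC, hyC⟩ := hy
  have hym := (mem_alternatingGroupOn_compl_singleton.mp (hC.apply_mem hyC)).2
  exact hC.eq_of_map_eq (hφ.mem_of_apply_eq hx (hxy ▸ hym) hC) hyC hxy

theorem mul_mem (hφ : SplitsOverPointStabilizers φ) {x y : Q} (hx : x ∈ pointLifts φ)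
    (hy : y ∈ pointLifts φ) {m : β} (hxm : φ x m = m) (hym : φ y m = m) :
    x * y ∈ pointLifts φ := by
  obtain ⟨C, hC⟩ := hφ.exists_isLift m
  exact ⟨m, C, hC,
    Subgroup.mul_mem _ (hφ.mem_of_apply_eq hx hxm hC) (hφ.mem_of_apply_eq hy hym hC)⟩

theorem exists_mem_map_eq (hφ : SplitsOverPointStabilizers φ) {g : Perm β}
    (hg : g ∈ alternatingGroup β) {m : β} (hm : g m = m) : ∃ x ∈ pointLifts φ, φ x = g := by
  obtain ⟨C, hC⟩ := hφ.exists_isLift m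
  obtain ⟨x, hxC, rfl⟩ := hC.map_eq ▸ mem_alternatingGroupOn_compl_singleton.mpr ⟨hg, hm⟩
  exact ⟨x, ⟨m, C, hC, hxC⟩, rfl⟩

theorem one_mem (hφ : SplitsOverPointStabilizers φ) : (1 : Q) ∈ pointLifts φ := by
  obtain ⟨m⟩ : Nonempty β := Fintype.card_pos_iff.mp (by have := hφ.seven_le_card; omega)
  obtain ⟨C, hC⟩ := hφ.exists_isLift m
  exact ⟨m, C, hC, C.one_mem⟩

theorem exists_mul_mul_eq_mul (hφ : SplitsOverPointStabilizers φ) {x y w : Q}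
    (hx : x ∈ pointLifts φ) (hy : y ∈ pointLifts φ) (hw : w ∈ pointLifts φ) :
    ∃ r ∈ pointLifts φ, ∃ t ∈ pointLifts φ, x * y * w = r * t := by
  obtain ⟨a, ha⟩ := exists_apply_eq_of_mem_pointLifts hx
  obtain ⟨b, hb⟩ := exists_apply_eq_of_mem_pointLifts hy
  obtain ⟨c, hc⟩ := exists_apply_eq_of_mem_pointLifts hw
  by_cases hca : c = a
  · subst hca
    exact ⟨_, conj_mem_pointLifts hy x, _, hφ.mul_mem hx hw ha hc, by group⟩
  by_cases hcb : c = b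
  · subst hcb
    exact ⟨x, hx, _, hφ.mul_mem hy hw hb hc, mul_assoc x y w⟩
  by_cases hyca : φ y c = a
  · have : φ (y * w * y⁻¹) a = a := by simp [← hyca, hc]
    exact ⟨_, hφ.mul_mem hx (conj_mem_pointLifts hw y) ha this, y, hy, by group⟩
  -- split `φ y = σ * (σ⁻¹ * φ y)` with `σ` fixing `a` and `b`, and `σ⁻¹ * φ y` fixing `b` and `c`
  have hycb : φ y c ≠ b := fun h => hcb ((φ y).injective (h.trans hb.symm))
  obtain ⟨σ, hσ, hσab, hσc⟩ := exists_mem_alternatingGroup_fix_apply_eq (s := {a, b})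
    (by have := Finset.card_le_two (a := a) (b := b); have := hφ.seven_le_card; omega)
    (p := c) (d := φ y c) (by simp [hca, hcb]) (by simp [hyca, hycb])
  obtain ⟨y₁, hy₁, rfl⟩ := hφ.exists_mem_map_eq hσ (hσab b (by simp))
  have hy₂ : y₁⁻¹ * y ∈ pointLifts φ :=
    hφ.mul_mem (inv_mem_pointLifts hy₁) hy (by simp [Equiv.symm_apply_eq, hσab b (by simp)]) hb
  exact ⟨x * y₁, hφ.mul_mem hx hy₁ ha (hσab a (by simp)), _,
    hφ.mul_mem hy₂ hw (m := c) (by simp [Equiv.symm_apply_eq, hσc]) hc, by group⟩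

theorem closure_pointLifts_subset (hφ : SplitsOverPointStabilizers φ) :
    (closure (pointLifts φ) : Set Q) ⊆ pointLifts φ * pointLifts φ := by
  intro g hg
  induction hg using closure_induction with
  | mem x hx => simpa using Set.mul_mem_mul hx hφ.one_mem
  | one => simpa using Set.mul_mem_mul hφ.one_mem hφ.one_mem
  | mul _ _ _ _ ih ih' =>
    obtain ⟨x, hx, y, hy, rfl⟩ := Set.mem_mul.mp ih
    obtain ⟨x', hx', y', hy', rfl⟩ := Set.mem_mul.mp ih'
    obtain ⟨r, hr, t, ht, hrt⟩ := hφ.exists_mul_mul_eq_mul hx hy hx'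
    obtain ⟨r', hr', t', ht', hrt'⟩ := hφ.exists_mul_mul_eq_mul hr ht hy'
    have : x * y * (x' * y') = r' * t' := by rw [← hrt', ← hrt]; group
    exact this ▸ Set.mul_mem_mul hr' ht'
  | inv _ _ ih =>
    obtain ⟨x, hx, y, hy, rfl⟩ := Set.mem_mul.mp ih
    exact mul_inv_rev x y ▸ Set.mul_mem_mul (inv_mem_pointLifts hy) (inv_mem_pointLifts hx)

theorem disjoint_closure_pointLifts_ker (hφ : SplitsOverPointStabilizers φ) :
    Disjoint (closure (pointLifts φ)) φ.ker := by
  rw [disjoint_def]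
  intro g hg hgker
  obtain ⟨x, hx, y, hy, rfl⟩ := Set.mem_mul.mp (hφ.closure_pointLifts_subset hg)
  have hxy : φ y = φ x⁻¹ := by
    rw [map_inv]
    exact eq_inv_of_mul_eq_one_right (by simpa using hgker)
  rw [hφ.eq_of_map_eq hy (inv_mem_pointLifts hx) hxy, mul_inv_cancel]

theorem alternatingGroup_le_map_closure_pointLifts (hφ : SplitsOverPointStabilizers φ) :
    alternatingGroup β ≤ (closure (pointLifts φ)).map φ := by
  rw [← closure_three_cycles_eq_alternating, closure_le]
  intro g hg
  obtain ⟨m, -, hm⟩ := Finset.exists_mem_notMem_of_card_lt_card (s := g.support)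
    (t := Finset.univ) <| by
      rw [(hg : g.IsThreeCycle).card_support, Finset.card_univ]
      have := hφ.seven_le_card
      omega
  obtain ⟨x, hx, rfl⟩ := hφ.exists_mem_map_eq hg.mem_alternatingGroup (notMem_support.mp hm)
  exact mem_map_of_mem φ (subset_closure hx)

theorem ker_eq_bot [IsPerfect Q] (hφ : SplitsOverPointStabilizers φ)
    (hrange : φ.range = alternatingGroup β) : φ.ker = ⊥ := by
  have htop : closure (pointLifts φ) = ⊤ := by
    refine eq_top_of_sup_center_eq_top (eq_top_iff.mpr fun q _ => ?_)
    refine sup_le_sup_left hφ.ker_le_center _ ?_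
    rw [← comap_map_eq]
    exact hφ.alternatingGroup_le_map_closure_pointLifts (hrange ▸ ⟨q, rfl⟩)
  exact top_disjoint.mp (htop ▸ hφ.disjoint_closure_pointLifts_ker)

end SplitsOverPointStabilizers

theorem ker_eq_bot_of_isLift [IsPerfect Q] (hker : φ.ker ≤ center Q)
    (hrange : φ.range = alternatingGroup β) (h7 : 7 ≤ Fintype.card β) {b : β} {C : Subgroup Q}
    (hC : IsLift φ C (alternatingGroupOn {b}ᶜ)) : φ.ker = ⊥ := by
  refine SplitsOverPointStabilizers.ker_eq_bot ⟨hker, h7, fun m => ?_⟩ hrange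
  obtain ⟨σ, hσ, -, rfl⟩ := exists_mem_alternatingGroup_fix_apply_eq (s := ∅) (by simp; omega)
    (p := b) (d := m) (by simp) (by simp)
  obtain ⟨q, rfl⟩ : σ ∈ φ.range := hrange ▸ hσ
  exact ⟨_, map_conj_alternatingGroupOn_compl_singleton (φ q) b ▸ hC.map_conj q⟩

end Splitting

/-- `G` is a double cover `2.A(α)`. -/
def IsDoubleCover (G : Type*) [Group G] (α : Type*) [DecidableEq α] [Fintype α] : Prop :=
  IsPerfect G ∧ Nat.card (center G) = 2 ∧ Nonempty (G ⧸ center G ≃* alternatingGroup α)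

theorem IsDoubleCover.of_equiv {G α α' : Type*} [Group G] [DecidableEq α] [Fintype α]
    [DecidableEq α'] [Fintype α'] (h : IsDoubleCover G α) (e : α ≃ α') : IsDoubleCover G α' :=
  let ⟨hperf, hcenter, ⟨f⟩⟩ := h
  ⟨hperf, hcenter, ⟨f.trans e.altCongrHom⟩⟩

section PointStabilizerPreimage

variable {Q : Type*} [Group Q] {β : Type*} [DecidableEq β] {φ : Q →* Perm β}

noncomputable def comapAlternatingGroupOnHom (φ : Q →* Perm β) (s : Finset β) :
    (alternatingGroupOn s).comap φ →* alternatingGroup s :=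
  (alternatingGroupOnEquiv s).symm.toMonoidHom.comp (φ.subgroupComap _)

theorem ker_comapAlternatingGroupOnHom (s : Finset β) :
    (comapAlternatingGroupOnHom φ s).ker = φ.ker.subgroupOf ((alternatingGroupOn s).comap φ) := by
  ext x
  simp only [comapAlternatingGroupOnHom, MonoidHom.mem_ker, MonoidHom.comp_apply, mem_subgroupOf,
    MulEquiv.coe_toMonoidHom, MulEquiv.map_eq_one_iff]
  exact Subtype.ext_iff

variable [Fintype β]

theorem comapAlternatingGroupOnHom_surjective (hrange : alternatingGroup β ≤ φ.range)
    (s : Finset β) : Function.Surjective (comapAlternatingGroupOnHom φ s) := by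
  refine (alternatingGroupOnEquiv s).symm.surjective.comp fun w => ?_
  obtain ⟨q, hq⟩ := hrange (mem_alternatingGroupOn.mp w.2).1
  exact ⟨⟨q, by simp [hq]⟩, Subtype.ext hq⟩

theorem isPerfect_comap_alternatingGroupOn [Finite Q] [IsPerfect Q] (hker : φ.ker ≤ center Q)
    (hkerp : (Nat.card φ.ker).Prime) (hrange : φ.range = alternatingGroup β)
    (h7 : 7 ≤ Fintype.card β) (b : β) : IsPerfect ((alternatingGroupOn {b}ᶜ).comap φ) := by
  set H := (alternatingGroupOn {b}ᶜ).comap φ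
  have : IsPerfect (alternatingGroupOn ({b}ᶜ : Finset β)) :=
    isPerfect_alternatingGroupOn (by rw [Finset.card_compl]; simp; omega)
  have hmapH : H.map φ = alternatingGroupOn {b}ᶜ :=
    map_comap_eq_self (hrange ▸ fun σ hσ => (mem_alternatingGroupOn_compl_singleton.mp hσ).1)
  have hmapK : (⁅H, H⁆).map φ = alternatingGroupOn {b}ᶜ := by
    rw [map_commutator, hmapH, commutator_eq_self]
  rw [isPerfect_iff]
  rcases disjoint_or_le_of_prime_card ⁅H, H⁆ hkerp with hdisj | hle
  · have := ker_eq_bot_of_isLift hker hrange h7 ⟨hmapK, hdisj⟩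
    rw [this, card_bot] at hkerp
    exact absurd hkerp Nat.not_prime_one
  · rw [← sup_eq_left.mpr hle, ← comap_map_eq, hmapK]

theorem isDoubleCover_comap_alternatingGroupOn [Finite Q] [IsPerfect Q]
    (hker : φ.ker = center Q) (hZ : Nat.card (center Q) = 2)
    (hrange : φ.range = alternatingGroup β) (h7 : 7 ≤ Fintype.card β) (b : β) :
    IsDoubleCover ((alternatingGroupOn {b}ᶜ).comap φ) ({b}ᶜ : Finset β) := by
  set K := (alternatingGroupOn {b}ᶜ).comap φ
  set ψ := comapAlternatingGroupOnHom φ {b}ᶜ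
  have hψ : Function.Surjective ψ := comapAlternatingGroupOnHom_surjective hrange.ge _
  have hkerK : φ.ker ≤ K := fun x hx => by
    rw [mem_comap, MonoidHom.mem_ker.mp hx]
    exact one_mem _
  have hcenter : center K = ψ.ker := by
    refine center_eq_ker_of_surjective hψ (fun x hx => ?_) (alternatingGroup.center_eq_bot ?_)
    · rw [ker_comapAlternatingGroupOnHom, mem_subgroupOf, hker] at hx
      exact mem_center_iff.mpr fun y => Subtype.ext (mem_center_iff.mp hx y)
    · simp
      omega
  refine ⟨isPerfect_comap_alternatingGroupOn hker.le (by rw [hker, hZ]; exact Nat.prime_two)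
    hrange h7 b, ?_, ⟨(QuotientGroup.quotientMulEquivOfEq hcenter).trans
      (QuotientGroup.quotientKerEquivOfSurjective ψ hψ)⟩⟩
  rw [hcenter, ker_comapAlternatingGroupOnHom, ← hZ, ← hker]
  exact Nat.card_congr (subgroupOfEquivOfLe hkerK).toEquiv

end PointStabilizerPreimage

section CosetAction

variable {Q : Type*} [Group Q] [IsPerfect Q]

theorem ker_eq_center_and_range_eq {β : Type*} [DecidableEq β] [Fintype β] [Finite Q]
    {φ : Q →* Perm β} (hker : φ.ker ≤ center Q)
    (hcard : Nat.card (center Q) * Nat.card (alternatingGroup β) ≤ Nat.card Q) :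
    φ.ker = center Q ∧ φ.range = alternatingGroup β := by
  have hQ : Nat.card φ.ker * Nat.card φ.range = Nat.card Q := by
    rw [← index_ker, card_mul_index]
  have h₁ := card_le_of_le hker
  have h₂ := card_le_of_le (range_le_alternatingGroup φ)
  have : 0 < Nat.card φ.ker := Nat.card_pos
  have : 0 < Nat.card φ.range := Nat.card_pos
  exact ⟨eq_of_le_of_card_ge hker (by nlinarith),
    eq_of_le_of_card_ge (range_le_alternatingGroup φ) (by nlinarith)⟩

theorem ker_toPermHom_le_center [IsSimpleGroup (Q ⧸ center Q)] {H : Subgroup Q} (hH : H ≠ ⊤) :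
    (MulAction.toPermHom Q (Q ⧸ H)).ker ≤ center Q := by
  refine (normal_eq_top_or_le_center _).resolve_left fun htop => hH ?_
  rw [eq_top_iff, ← htop, ← normalCore_eq_ker]
  exact H.normalCore_le

theorem eq_comap_alternatingGroupOn_toPermHom (H : Subgroup Q) [Fintype (Q ⧸ H)]
    [DecidableEq (Q ⧸ H)] :
    H = (alternatingGroupOn {((1 : Q) : Q ⧸ H)}ᶜ).comap (MulAction.toPermHom Q (Q ⧸ H)) := by
  ext q
  rw [mem_comap, mem_alternatingGroupOn_compl_singleton,
    and_iff_right (range_le_alternatingGroup _ ⟨q, rfl⟩)]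
  conv_lhs => rw [← MulAction.stabilizer_quotient H]
  rfl

end CosetAction

/-- For `n ≥ 7`, every index-`n` subgroup of the double cover `2.Aₙ` (a finite
perfect group `Q` with `|Z(Q)| = 2` and `Q/Z(Q) ≅ Aₙ`) is isomorphic to
`2.A_{n-1}` (perfect, centre of order 2, central quotient `A_{n-1}`);
consequently no index-`n` subgroup is isomorphic to `A_{n-1} × ℤ₂`. -/
theorem double_cover_An_index_n_subgroups {n : ℕ} (hn : 7 ≤ n)
    {Q : Type*} [Group Q] [Finite Q]
    (hperf : commutator Q = ⊤)
    (hZ : Nat.card (Subgroup.center Q) = 2)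
    (hquot : Nonempty ((Q ⧸ Subgroup.center Q) ≃* alternatingGroup (Fin n))) :
    (∀ H : Subgroup Q, H.index = n →
      commutator ↥H = ⊤ ∧ Nat.card (Subgroup.center ↥H) = 2 ∧
      Nonempty ((↥H ⧸ Subgroup.center ↥H) ≃* alternatingGroup (Fin (n - 1)))) ∧
    (∀ H : Subgroup Q, H.index = n →
      ¬ Nonempty (↥H ≃* (alternatingGroup (Fin (n - 1)) × Multiplicative (ZMod 2)))) := by
  classical
  obtain ⟨e⟩ := hquot
  have : IsPerfect Q := ⟨hperf⟩
  have : IsSimpleGroup (Q ⧸ center Q) :=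
    have := alternatingGroup.isSimpleGroup (α := Fin n) (by simp; omega)
    e.isSimpleGroup
  have isDoubleCover (H : Subgroup Q) (hH : H.index = n) : IsDoubleCover H (Fin (n - 1)) := by
    have := Fintype.ofFinite (Q ⧸ H)
    have hX : Fintype.card (Q ⧸ H) = n := by rw [← Nat.card_eq_fintype_card, ← index_eq_card, hH]
    have hHtop : H ≠ ⊤ := by rintro rfl; rw [index_top] at hH; omega
    obtain ⟨hker, hrange⟩ := ker_eq_center_and_range_eq (ker_toPermHom_le_center hHtop) <| by
      rw [Nat.card_congr (Fintype.equivFinOfCardEq hX).altCongrHom.toEquiv,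
        ← Nat.card_congr e.toEquiv, card_eq_card_quotient_mul_card_subgroup (center Q), mul_comm]
    have h := isDoubleCover_comap_alternatingGroupOn hker hZ hrange (by omega) ((1 : Q) : Q ⧸ H)
    rw [← eq_comap_alternatingGroupOn_toPermHom H] at h
    exact h.of_equiv (Fintype.equivFinOfCardEq (by simp [hX]))
  refine ⟨fun H hH => ?_, fun H hH => ?_⟩
  · obtain ⟨hperfH, hcenter, hquot⟩ := isDoubleCover H hH
    exact ⟨hperfH.commutator_eq_top, hcenter, hquot⟩
  · have := (isDoubleCover H hH).1
    exact IsPerfect.not_nonempty_mulEquiv_prod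
end

section
/- Let Γ be a connected graph, X ≤ Aut(Γ) arc-transitive of prime valency p, and N ⊴ X with at least three orbits on V(Γ). Then N acts semiregularly on V(Γ) (all vertex stabilizers N_v are trivial), N is the kernel of the action of X on the orbit set of N, the quotient graph Γ_N has valency p, and X/N acts arc-transitively on Γ_N with (X/N)_{v̄} ≅ X_v for v ∈ V(Γ). -/
/-- The set of orbits of a subgroup `N ≤ Sym(V)` on `V`. -/
abbrev orbQuot {V : Type*} (N : Subgroup (Equiv.Perm V)) :=
  Quotient (MulAction.orbitRel N V)

/-- The normal quotient graph: vertices are the `N`-orbits, two orbits being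
adjacent iff some vertex of one is adjacent to some vertex of the other. -/
def quotGraph {V : Type*} (Γ : SimpleGraph V) (N : Subgroup (Equiv.Perm V)) :
    SimpleGraph (orbQuot N) where
  Adj a b := a ≠ b ∧ ∃ u w : V,
    Quotient.mk (MulAction.orbitRel N V) u = a ∧
    Quotient.mk (MulAction.orbitRel N V) w = b ∧ Γ.Adj u w
  symm := by
    constructor
    rintro a b ⟨hne, u, w, hu, hw, h⟩
    exact ⟨hne.symm, w, u, hw, hu, h.symm⟩
  loopless := by constructor; rintro a ⟨hne, _⟩; exact hne rfl

/-- The stabilizer in `X` of the `N`-orbit of `v`, as a subgroup of `Sym(V)`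
(for `N` normal in `X`). -/
def orbStab {V : Type*} (X N : Subgroup (Equiv.Perm V)) (hNX : N ≤ X)
    (hNnorm : ∀ x ∈ X, ∀ n ∈ N, x * n * x⁻¹ ∈ N) (v : V) :
    Subgroup (Equiv.Perm V) where
  carrier := {x | x ∈ X ∧
    Quotient.mk (MulAction.orbitRel N V) (x v) =
    Quotient.mk (MulAction.orbitRel N V) v}
  one_mem' := ⟨X.one_mem, rfl⟩
  mul_mem' := by
    rintro x y ⟨hxX, hx2⟩ ⟨hyX, hy2⟩
    refine ⟨X.mul_mem hxX hyX, ?_⟩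
    obtain ⟨n, hn⟩ := Quotient.exact hy2
    have hm : x * (n : Equiv.Perm V) * x⁻¹ ∈ N := hNnorm x hxX n n.2
    have key : Quotient.mk (MulAction.orbitRel N V) ((x * y) v) =
        Quotient.mk (MulAction.orbitRel N V) (x v) := by
      refine Quotient.sound ⟨⟨x * (n : Equiv.Perm V) * x⁻¹, hm⟩, ?_⟩
      show (x * (n : Equiv.Perm V) * x⁻¹) • (x v) = (x * y) v
      have hnv : (n : Equiv.Perm V) v = y v := hn
      simp [Equiv.Perm.smul_def, Equiv.Perm.mul_apply, hnv]
    exact key.trans hx2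
  inv_mem' := by
    rintro x ⟨hxX, hx2⟩
    refine ⟨X.inv_mem hxX, ?_⟩
    obtain ⟨n, hn⟩ := Quotient.exact hx2
    have hm : x⁻¹ * ((n : Equiv.Perm V))⁻¹ * x ∈ N := by
      have := hNnorm x⁻¹ (X.inv_mem hxX) _ (N.inv_mem n.2)
      simpa using this
    refine Quotient.sound ⟨⟨x⁻¹ * ((n : Equiv.Perm V))⁻¹ * x, hm⟩, ?_⟩
    show (x⁻¹ * ((n : Equiv.Perm V))⁻¹ * x) • v = x⁻¹ v
    have hnv : (n : Equiv.Perm V) v = x v := hn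
    have hinv : ((n : Equiv.Perm V))⁻¹ (x v) = v := by
      rw [← hnv]; simp
    simp [Equiv.Perm.smul_def, Equiv.Perm.mul_apply, hinv]

/-!
Since `N ⊴ X`, the partition of `V` into `N`-orbits is `X`-invariant, so on the neighbourhood
`Γ(u)` it induces a block system for `X_u`, which is transitive on these `p` vertices. As `p` is
prime, the neighbours of `u` lie either all in one `N`-orbit or in `p` distinct ones; the first
alternative would, by vertex-transitivity and connectedness, leave at most two `N`-orbits.
So an element of `X` fixing every `N`-orbit and a vertex `u` fixes every neighbour of `u`, hence,
by connectedness, every vertex. This gives the semiregularity of `N` and the description of the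
kernel, and together with a Frattini argument the isomorphism `(X/N)_{v̄} ≅ X_v`; the injectivity
of the orbit map on `Γ(u)` gives the valency of `Γ_N`.
-/

open MulAction Function

theorem MulAction.injective_or_forall_eq_of_prime_card {G α β : Type*} [Group G]
    [MulAction G α] [IsPretransitive G α] (hp : (Nat.card α).Prime) (f : α → β)
    (hf : ∀ (g : G) (a b : α), f a = f b → f (g • a) = f (g • b)) :
    Injective f ∨ ∀ a b, f a = f b := by
  have := IsPreprimitive.of_prime_card (G := G) hp
  have hblock (a : α) : IsBlock G {b | f b = f a} := by
    refine isBlock_iff_smul_eq_of_mem.mpr fun g b hb hgb => Set.ext fun c => ?_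
    rw [Set.mem_smul_set_iff_inv_smul_mem]
    constructor
    · intro h
      have := hf g _ _ (h.trans hb.symm)
      rw [smul_inv_smul] at this
      exact this.trans hgb
    · intro h
      have := hf g⁻¹ _ _ (h.trans hgb.symm)
      rw [inv_smul_smul] at this
      exact this.trans hb
  refine or_iff_not_imp_right.mpr fun hnconst a b hab => ?_
  rcases (hblock a).subsingleton_or_eq_univ with hsub | huniv
  · exact hsub rfl hab.symm
  · refine absurd (fun c d => ?_) hnconst
    have hc : c ∈ {b | f b = f a} := huniv ▸ Set.mem_univ c
    have hd : d ∈ {b | f b = f a} := huniv ▸ Set.mem_univ d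
    exact hc.trans hd.symm

namespace SimpleGraph

variable {V : Type*} (Γ : SimpleGraph V)

def IsAutSubgroup (X : Subgroup (Equiv.Perm V)) : Prop :=
  ∀ x ∈ X, ∀ u w : V, Γ.Adj (x u) (x w) ↔ Γ.Adj u w

def IsArcTransitive (X : Subgroup (Equiv.Perm V)) : Prop :=
  ∀ u w u' w' : V, Γ.Adj u w → Γ.Adj u' w' → ∃ x ∈ X, x u = u' ∧ x w = w'

variable {Γ} {X : Subgroup (Equiv.Perm V)}

theorem IsAutSubgroup.mono {Y : Subgroup (Equiv.Perm V)} (hX : Γ.IsAutSubgroup X)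
    (hYX : Y ≤ X) :
    Γ.IsAutSubgroup Y :=
  fun y hy => hX y (hYX hy)

theorem IsAutSubgroup.adj_inv_apply (hX : Γ.IsAutSubgroup X) {x : Equiv.Perm V} (hx : x ∈ X)
    {u w : V} (h : Γ.Adj u w) : Γ.Adj (x⁻¹ u) (x⁻¹ w) :=
  (hX x⁻¹ (X.inv_mem hx) u w).mpr h

theorem IsArcTransitive.exists_apply_eq (harc : Γ.IsArcTransitive X)
    (hnbr : ∀ u, (Γ.neighborSet u).Nonempty) (u w : V) : ∃ x ∈ X, x u = w := by
  obtain ⟨u', hu'⟩ := hnbr u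
  obtain ⟨w', hw'⟩ := hnbr w
  obtain ⟨x, hx, hxu, -⟩ := harc u u' w w' hu' hw'
  exact ⟨x, hx, hxu⟩

def neighborSubMulAction (hX : Γ.IsAutSubgroup X) (u : V) :
    SubMulAction ↥(X ⊓ MulAction.stabilizer (Equiv.Perm V) u) V where
  carrier := Γ.neighborSet u
  smul_mem' g w hw := by
    have hgu : (g : Equiv.Perm V) u = u := (Subgroup.mem_inf.mp g.2).2
    have := (hX g (Subgroup.mem_inf.mp g.2).1 u w).mpr hw
    rwa [hgu] at this

theorem IsArcTransitive.isPretransitive_neighborSubMulAction (harc : Γ.IsArcTransitive X)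
    (hX : Γ.IsAutSubgroup X) (u : V) :
    IsPretransitive ↥(X ⊓ MulAction.stabilizer (Equiv.Perm V) u)
      (neighborSubMulAction hX u) := by
  refine ⟨fun ⟨a, ha⟩ ⟨b, hb⟩ => ?_⟩
  obtain ⟨x, hx, hxu, hxa⟩ := harc u a u b ha hb
  exact ⟨⟨x, hx, hxu⟩, Subtype.ext hxa⟩

theorem Connected.induction_on {P : V → Prop} (hconn : Γ.Connected) {u : V} (hu : P u)
    (hstep : ∀ z w, Γ.Adj z w → P z → P w) (z : V) : P z := by
  induction (Γ.reachable_iff_reflTransGen u z).mp (hconn u z) with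
  | refl => exact hu
  | tail _ hadj ih => exact hstep _ _ hadj ih

theorem Connected.apply_eq_or_apply_eq {β : Type*} (hconn : Γ.Connected) (f : V → β)
    (hf : ∀ z w w', Γ.Adj z w → Γ.Adj z w' → f w = f w') {u w : V} (huw : Γ.Adj u w)
    (z : V) : f z = f u ∨ f z = f w := by
  -- `f` alternates between `f u` and `f w` along every walk from `u`.
  refine (hconn.induction_on (u := u) (P := fun t =>
      (f t = f u ∧ ∀ y, Γ.Adj t y → f y = f w) ∨
        (f t = f w ∧ ∀ y, Γ.Adj t y → f y = f u))
    (Or.inl ⟨rfl, fun y hy => hf u y w hy huw⟩) ?_ z).imp And.left And.left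
  rintro t t' htt' (⟨ht, hnbr⟩ | ⟨ht, hnbr⟩)
  · exact Or.inr ⟨hnbr t' htt', fun y hy => (hf t' y t hy htt'.symm).trans ht⟩
  · exact Or.inl ⟨hnbr t' htt', fun y hy => (hf t' y t hy htt'.symm).trans ht⟩

end SimpleGraph

namespace NormalQuotient

open SimpleGraph

variable {V : Type*} {Γ : SimpleGraph V} {X N : Subgroup (Equiv.Perm V)}

local notation "orb" => Quotient.mk (MulAction.orbitRel N V)

theorem mk_apply_of_mem {n : Equiv.Perm V} (hn : n ∈ N) (u : V) : orb (n u) = orb u :=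
  Quotient.sound ⟨⟨n, hn⟩, rfl⟩

theorem mk_apply_eq_mk_apply (hNnorm : ∀ x ∈ X, ∀ n ∈ N, x * n * x⁻¹ ∈ N)
    {x : Equiv.Perm V} (hx : x ∈ X) {u w : V} (h : orb u = orb w) : orb (x u) = orb (x w) := by
  obtain ⟨⟨n, hn⟩, rfl⟩ := Quotient.exact h
  simpa using mk_apply_of_mem (hNnorm x hx n hn) (x w)

theorem not_forall_mk_eq_or_mk_eq (horb : ∃ a b c : orbQuot N, a ≠ b ∧ a ≠ c ∧ b ≠ c)
    (u w : V) :
    ¬ ∀ z, orb z = orb u ∨ orb z = orb w := by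
  intro h
  obtain ⟨a, b, c, hab, hac, hbc⟩ := horb
  induction a using Quotient.ind
  induction b using Quotient.ind
  induction c using Quotient.ind
  grind

theorem mk_ne_mk_of_adj (hconn : Γ.Connected) (harc : Γ.IsArcTransitive X)
    (hNnorm : ∀ x ∈ X, ∀ n ∈ N, x * n * x⁻¹ ∈ N)
    (horb : ∃ a b c : orbQuot N, a ≠ b ∧ a ≠ c ∧ b ≠ c) {u w : V} (huw : Γ.Adj u w) :
    orb u ≠ orb w := by
  intro heq
  have hedge (z y : V) (hzy : Γ.Adj z y) : orb z = orb y := by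
    obtain ⟨x, hx, rfl, rfl⟩ := harc u w z y huw hzy
    exact mk_apply_eq_mk_apply hNnorm hx heq
  exact not_forall_mk_eq_or_mk_eq horb u w <| hconn.apply_eq_or_apply_eq _
    (fun z y y' hy hy' => (hedge z y hy).symm.trans (hedge z y' hy')) huw

theorem exists_adj_adj_mk_ne (hconn : Γ.Connected) (hX : Γ.IsAutSubgroup X)
    (harc : Γ.IsArcTransitive X) (hNnorm : ∀ x ∈ X, ∀ n ∈ N, x * n * x⁻¹ ∈ N)
    (horb : ∃ a b c : orbQuot N, a ≠ b ∧ a ≠ c ∧ b ≠ c)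
    (hnbr : ∀ u, (Γ.neighborSet u).Nonempty) (u : V) :
    ∃ w w', Γ.Adj u w ∧ Γ.Adj u w' ∧ orb w ≠ orb w' := by
  by_contra! h
  have hall (z y y' : V) (hy : Γ.Adj z y) (hy' : Γ.Adj z y') : orb y = orb y' := by
    obtain ⟨x, hx, rfl⟩ := harc.exists_apply_eq hnbr u z
    have := mk_apply_eq_mk_apply hNnorm hx <|
      h _ _ (by simpa using hX.adj_inv_apply hx hy) (by simpa using hX.adj_inv_apply hx hy')
    simpa using this
  obtain ⟨w, huw⟩ := hnbr u
  exact not_forall_mk_eq_or_mk_eq horb u w (hconn.apply_eq_or_apply_eq _ hall huw)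

theorem mk_injOn_neighborSet (hX : Γ.IsAutSubgroup X) (harc : Γ.IsArcTransitive X)
    (hNnorm : ∀ x ∈ X, ∀ n ∈ N, x * n * x⁻¹ ∈ N) {u : V}
    (hprime : (Nat.card (Γ.neighborSet u)).Prime)
    (hsplit : ∃ w w', Γ.Adj u w ∧ Γ.Adj u w' ∧ orb w ≠ orb w') :
    Set.InjOn orb (Γ.neighborSet u) := by
  have := harc.isPretransitive_neighborSubMulAction hX u
  rcases injective_or_forall_eq_of_prime_card (α := neighborSubMulAction hX u)
    hprime (fun w => orb (w : V))
    (fun (g : ↥(X ⊓ MulAction.stabilizer (Equiv.Perm V) u)) _ _ h =>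
      mk_apply_eq_mk_apply hNnorm (Subgroup.mem_inf.mp g.2).1 h) with hinj | hconst
  · exact fun w hw w' hw' h => congrArg Subtype.val (@hinj ⟨w, hw⟩ ⟨w', hw'⟩ h)
  · obtain ⟨w, w', hw, hw', hne⟩ := hsplit
    exact absurd (hconst ⟨w, hw⟩ ⟨w', hw'⟩) hne

theorem eq_one_of_forall_mk_apply_eq (hX : Γ.IsAutSubgroup X) (hconn : Γ.Connected)
    (hinj : ∀ u, Set.InjOn orb (Γ.neighborSet u)) {y : Equiv.Perm V} (hy : y ∈ X)
    (hyorb : ∀ z, orb (y z) = orb z) {u : V} (hu : y u = u) : y = 1 := by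
  refine Equiv.ext <| hconn.induction_on hu fun z w hzw hz => ?_
  have hyw : Γ.Adj z (y w) := by simpa [hz] using (hX y hy z w).mpr hzw
  exact hinj z hyw hzw (hyorb w)

theorem forall_mk_apply_eq_iff_mem [Nonempty V] (hX : Γ.IsAutSubgroup X) (hconn : Γ.Connected)
    (hNX : N ≤ X) (hinj : ∀ u, Set.InjOn orb (Γ.neighborSet u)) {x : Equiv.Perm V}
    (hx : x ∈ X) : (∀ u, orb (x u) = orb u) ↔ x ∈ N := by
  refine ⟨fun hxorb => ?_, fun hxN => mk_apply_of_mem hxN⟩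
  obtain ⟨v⟩ := ‹Nonempty V›
  obtain ⟨⟨n, hn⟩, hnv⟩ := Quotient.exact (hxorb v)
  have hnx : n⁻¹ * x = 1 := by
    refine eq_one_of_forall_mk_apply_eq hX hconn hinj (X.mul_mem (X.inv_mem (hNX hn)) hx)
      (fun z => ?_) (u := v) ?_
    · simpa using (mk_apply_of_mem (N.inv_mem hn) (x z)).trans (hxorb z)
    · simp [← hnv]
  exact inv_mul_eq_one.mp hnx ▸ hn

theorem neighborSet_quotGraph_mk (hN : Γ.IsAutSubgroup N)
    (hsep : ∀ u w, Γ.Adj u w → orb u ≠ orb w) (u : V) :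
    (quotGraph Γ N).neighborSet (orb u) = orb '' Γ.neighborSet u := by
  ext b
  constructor
  · rintro ⟨-, u', w, hu', rfl, hadj⟩
    obtain ⟨⟨n, hn⟩, rfl⟩ := Quotient.exact hu'
    exact ⟨n⁻¹ w, by simpa using hN.adj_inv_apply hn hadj,
      by simpa using mk_apply_of_mem (N.inv_mem hn) w⟩
  · rintro ⟨w, hw, rfl⟩
    exact ⟨hsep u w hw, u, w, rfl, rfl, hw⟩

theorem card_neighborSet_quotGraph_mk (hN : Γ.IsAutSubgroup N)
    (hsep : ∀ u w, Γ.Adj u w → orb u ≠ orb w) {u : V}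
    (hinj : Set.InjOn orb (Γ.neighborSet u)) :
    Nat.card ((quotGraph Γ N).neighborSet (orb u)) = Nat.card (Γ.neighborSet u) := by
  rw [neighborSet_quotGraph_mk hN hsep, Nat.card_image_of_injOn hinj]

theorem exists_mem_mk_apply_eq_of_quotGraph_adj (harc : Γ.IsArcTransitive X)
    (hNnorm : ∀ x ∈ X, ∀ n ∈ N, x * n * x⁻¹ ∈ N) {a b c d : orbQuot N}
    (hab : (quotGraph Γ N).Adj a b) (hcd : (quotGraph Γ N).Adj c d) :
    ∃ x ∈ X, (∀ u, orb u = a → orb (x u) = c) ∧ (∀ u, orb u = b → orb (x u) = d) := by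
  obtain ⟨-, u, w, rfl, rfl, huw⟩ := hab
  obtain ⟨-, u', w', rfl, rfl, huw'⟩ := hcd
  obtain ⟨x, hx, rfl, rfl⟩ := harc u w u' w' huw huw'
  exact ⟨x, hx, fun _ => mk_apply_eq_mk_apply hNnorm hx,
    fun _ => mk_apply_eq_mk_apply hNnorm hx⟩

theorem nonempty_quotient_orbStab_mulEquiv_stabilizer (hNX : N ≤ X)
    (hNnorm : ∀ x ∈ X, ∀ n ∈ N, x * n * x⁻¹ ∈ N) (v : V)
    [(N.subgroupOf (orbStab X N hNX hNnorm v)).Normal] (hfree : ∀ n ∈ N, n v = v → n = 1) :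
    Nonempty ((↥(orbStab X N hNX hNnorm v) ⧸ N.subgroupOf (orbStab X N hNX hNnorm v)) ≃*
      ↥(X ⊓ MulAction.stabilizer (Equiv.Perm V) v)) := by
  set S := orbStab X N hNX hNnorm v
  have hle : X ⊓ MulAction.stabilizer (Equiv.Perm V) v ≤ S :=
    fun x hx => ⟨hx.1, congrArg orb hx.2⟩
  let φ := (QuotientGroup.mk' (N.subgroupOf S)).comp (Subgroup.inclusion hle)
  refine ⟨(MulEquiv.ofBijective φ ⟨?_, ?_⟩).symm⟩
  · refine (injective_iff_map_eq_one φ).mpr fun x hx => Subtype.ext (hfree _ ?_ x.2.2)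
    exact (QuotientGroup.eq_one_iff (Subgroup.inclusion hle x)).mp hx
  · -- Frattini argument: `s = n * (n⁻¹ * s)` with `n ∈ N` and `n⁻¹ * s` fixing `v`.
    refine (QuotientGroup.mk'_surjective _).forall.mpr fun s => ?_
    obtain ⟨⟨n, hn⟩, hnv⟩ := Quotient.exact s.2.2
    refine ⟨⟨n⁻¹ * s, X.mul_mem (X.inv_mem (hNX hn)) s.2.1, by simp [← hnv]⟩, ?_⟩
    rw [MonoidHom.comp_apply, QuotientGroup.mk'_apply, QuotientGroup.mk'_apply,
      QuotientGroup.eq, Subgroup.mem_subgroupOf]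
    simpa [mul_assoc] using hNnorm _ (X.inv_mem s.2.1) n hn

end NormalQuotient

open SimpleGraph NormalQuotient in
theorem lorimer_normal_quotient_general {V : Type*}
    (Γ : SimpleGraph V) (p : ℕ) (hp : p.Prime)
    (X N : Subgroup (Equiv.Perm V))
    (hXaut : ∀ x ∈ X, ∀ u w : V, Γ.Adj (x u) (x w) ↔ Γ.Adj u w)
    (hconn : Γ.Connected)
    (hval : ∀ u : V, Nat.card (Γ.neighborSet u) = p)
    (harc : ∀ u w u' w' : V, Γ.Adj u w → Γ.Adj u' w' →
      ∃ x ∈ X, x u = u' ∧ x w = w')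
    (hNX : N ≤ X) (hNnorm : ∀ x ∈ X, ∀ n ∈ N, x * n * x⁻¹ ∈ N)
    (horb : ∃ a b c : orbQuot N, a ≠ b ∧ a ≠ c ∧ b ≠ c)
    (v : V)
    [hns : (N.subgroupOf (orbStab X N hNX hNnorm v)).Normal] :
    (∀ n ∈ N, (∃ u : V, n u = u) → n = 1) ∧
    (∀ x ∈ X, ((∀ u : V, Quotient.mk (MulAction.orbitRel N V) (x u) =
        Quotient.mk (MulAction.orbitRel N V) u) ↔ x ∈ N)) ∧
    (∀ a : orbQuot N, Nat.card ((quotGraph Γ N).neighborSet a) = p) ∧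
    (∀ a b c d : orbQuot N, (quotGraph Γ N).Adj a b → (quotGraph Γ N).Adj c d →
      ∃ x ∈ X,
        (∀ u : V, Quotient.mk (MulAction.orbitRel N V) u = a →
          Quotient.mk (MulAction.orbitRel N V) (x u) = c) ∧
        (∀ u : V, Quotient.mk (MulAction.orbitRel N V) u = b →
          Quotient.mk (MulAction.orbitRel N V) (x u) = d)) ∧
    Nonempty ((↥(orbStab X N hNX hNnorm v) ⧸
        N.subgroupOf (orbStab X N hNX hNnorm v)) ≃*
      ↥(X ⊓ MulAction.stabilizer (Equiv.Perm V) v)) := by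
  have hprime (u : V) : (Nat.card (Γ.neighborSet u)).Prime := hval u ▸ hp
  have hnbr (u : V) : (Γ.neighborSet u).Nonempty :=
    Set.nonempty_coe_sort.mp (Nat.card_pos_iff.mp (hprime u).pos).1
  have hinj (u : V) : Set.InjOn (Quotient.mk (MulAction.orbitRel N V)) (Γ.neighborSet u) :=
    mk_injOn_neighborSet hXaut harc hNnorm (hprime u)
      (exists_adj_adj_mk_ne hconn hXaut harc hNnorm horb hnbr u)
  have hfree : ∀ n ∈ N, (∃ u : V, n u = u) → n = 1 := fun n hn ⟨_, hu⟩ =>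
    eq_one_of_forall_mk_apply_eq hXaut hconn hinj (hNX hn) (mk_apply_of_mem hn) hu
  have : Nonempty V := ⟨v⟩
  refine ⟨hfree, fun x hx => forall_mk_apply_eq_iff_mem hXaut hconn hNX hinj hx,
    Quotient.ind fun u => ?_,
    fun _ _ _ _ => exists_mem_mk_apply_eq_of_quotGraph_adj harc hNnorm,
    nonempty_quotient_orbStab_mulEquiv_stabilizer hNX hNnorm v
      fun n hn hnv => hfree n hn ⟨v, hnv⟩⟩
  rw [card_neighborSet_quotGraph_mk (IsAutSubgroup.mono hXaut hNX)
    (fun _ _ => mk_ne_mk_of_adj hconn harc hNnorm horb) (hinj u), hval u]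

/-- Lorimer's theorem: if `X` is arc-transitive on a connected graph of prime
valency `p` and `N ⊴ X` has at least three orbits, then `N` is semiregular, `N`
is the kernel of the action of `X` on the orbits, the quotient graph has valency
`p`, `X` (hence `X/N`) is arc-transitive on it, and the stabilizer in `X/N` of
the orbit of `v` is isomorphic to `X_v`. -/
theorem lorimer_normal_quotient {V : Type*} [Finite V]
    (Γ : SimpleGraph V) (p : ℕ) (hp : p.Prime)
    (X N : Subgroup (Equiv.Perm V))
    (hXaut : ∀ x ∈ X, ∀ u w : V, Γ.Adj (x u) (x w) ↔ Γ.Adj u w)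
    (hconn : Γ.Connected)
    (hval : ∀ u : V, Nat.card (Γ.neighborSet u) = p)
    (harc : ∀ u w u' w' : V, Γ.Adj u w → Γ.Adj u' w' →
      ∃ x ∈ X, x u = u' ∧ x w = w')
    (hNX : N ≤ X) (hNnorm : ∀ x ∈ X, ∀ n ∈ N, x * n * x⁻¹ ∈ N)
    (horb : ∃ a b c : orbQuot N, a ≠ b ∧ a ≠ c ∧ b ≠ c)
    (v : V)
    [hns : (N.subgroupOf (orbStab X N hNX hNnorm v)).Normal] :
    (∀ n ∈ N, (∃ u : V, n u = u) → n = 1) ∧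
    (∀ x ∈ X, ((∀ u : V, Quotient.mk (MulAction.orbitRel N V) (x u) =
        Quotient.mk (MulAction.orbitRel N V) u) ↔ x ∈ N)) ∧
    (∀ a : orbQuot N, Nat.card ((quotGraph Γ N).neighborSet a) = p) ∧
    (∀ a b c d : orbQuot N, (quotGraph Γ N).Adj a b → (quotGraph Γ N).Adj c d →
      ∃ x ∈ X,
        (∀ u : V, Quotient.mk (MulAction.orbitRel N V) u = a →
          Quotient.mk (MulAction.orbitRel N V) (x u) = c) ∧
        (∀ u : V, Quotient.mk (MulAction.orbitRel N V) u = b →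
          Quotient.mk (MulAction.orbitRel N V) (x u) = d)) ∧
    Nonempty ((↥(orbStab X N hNX hNnorm v) ⧸
        N.subgroupOf (orbStab X N hNX hNnorm v)) ≃*
      ↥(X ⊓ MulAction.stabilizer (Equiv.Perm V) v)) :=
  lorimer_normal_quotient_general Γ p hp X N hXaut hconn hval harc hNX hNnorm horb v (hns := hns)
end
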